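/- The inverse function m is twice differentiable on the open interval (g(Δ₁), g(Δ₂)), and there exist constants 0 < c₁ ≤ c₂ depending only on c and θ such that for every x ≥ 2 and every t in this interval, c₁·t^{γ−2} ≤ |m″(t)| ≤ c₂·t^{γ−2}. -/

import Mathlib

open Real

/-- `Δ₁ = exp(π·⌊(log x)/π⌋ + arctan 1)` -/
noncomputable def Δ₁ (x : ℝ) : ℝ :=
  Real.exp (Real.pi * (⌊Real.log x / Real.pi⌋ : ℝ) + Real.arctan 1)

/-- `Δ₂ = exp(π·⌊(log x)/π⌋ + arctan 2)` -/
noncomputable def Δ₂ (x : ℝ) : ℝ :=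
  Real.exp (Real.pi * (⌊Real.log x / Real.pi⌋ : ℝ) + Real.arctan 2)

/-- `g(y) = y^c · (tan(log y))^θ` (real powers). -/
noncomputable def g (c θ y : ℝ) : ℝ := y ^ c * Real.tan (Real.log y) ^ θ

/-
On `[Δ₁ x, Δ₂ x]` the quantity `T = tan (log y)` stays in `[1, 2]`. Since
`(tan ∘ log)' y = (1 + T ^ 2) / y`, one gets `g' y = y ^ (c - 1) * Q T` and
`g'' y = y ^ (c - 2) * P T` with `Q = gDerivFactor c θ` and `P = gDeriv2Factor c θ` positive
for `T > 0`. The inverse `m` of the increasing `g` satisfies `m'' = -g''(m) / g'(m) ^ 3`;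
as `t = y ^ c * T ^ θ` for `y = m t`, this equals `-ρ T * t ^ (1 / c - 2)` with
`ρ T = P T / Q T ^ 3 * T ^ (θ * (2 - 1 / c))` (`mDeriv2Factor`), and `c₁ ≤ c₂` are the extreme
values of the continuous positive function `ρ` on `[1, 2]`.
-/

open Set Filter Topology

section RightInverse

variable {f f' m : ℝ → ℝ} {a b t : ℝ}

theorem strictMonoOn_Icc_of_hasDerivAt_pos (hf : ∀ y ∈ Icc a b, HasDerivAt f (f' y) y)
    (hf' : ∀ y ∈ Icc a b, 0 < f' y) : StrictMonoOn f (Icc a b) :=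
  strictMonoOn_of_deriv_pos (convex_Icc a b)
    (fun y hy => (hf y hy).continuousAt.continuousWithinAt) fun y hy => by
      rw [interior_Icc] at hy
      rw [(hf y (Ioo_subset_Icc_self hy)).deriv]
      exact hf' y (Ioo_subset_Icc_self hy)

variable (hmaps : MapsTo m (Icc (f a) (f b)) (Icc a b)) (hinv : RightInvOn m f (Icc (f a) (f b)))
include hmaps hinv

theorem mapsTo_Ioo_of_rightInvOn : MapsTo m (Ioo (f a) (f b)) (Ioo a b) := by
  intro t ht
  obtain ⟨hat, htb⟩ := hmaps (Ioo_subset_Icc_self ht)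
  have hft : f (m t) = t := hinv (Ioo_subset_Icc_self ht)
  refine ⟨hat.lt_of_ne ?_, htb.lt_of_ne ?_⟩ <;> rintro h
  · exact ht.1.ne (by rw [← hft, ← h])
  · exact ht.2.ne (by rw [← hft, h])

theorem StrictMonoOn.continuousAt_of_rightInvOn (hf : StrictMonoOn f (Icc a b))
    (ht : t ∈ Ioo (f a) (f b)) :
    ContinuousAt m t := by
  have hmono : MonotoneOn m (Ioo (f a) (f b)) := fun s hs u hu hsu => by
    have hs' := Ioo_subset_Icc_self hs
    have hu' := Ioo_subset_Icc_self hu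
    rwa [← hf.le_iff_le (hmaps hs') (hmaps hu'), hinv hs', hinv hu']
  refine continuousAt_of_monotoneOn_of_image_mem_nhds hmono (isOpen_Ioo.mem_nhds ht) ?_
  refine mem_of_superset (isOpen_Ioo.mem_nhds (mapsTo_Ioo_of_rightInvOn hmaps hinv ht))
    fun y hy => ?_
  have hy' := Ioo_subset_Icc_self hy
  have hfy : f y ∈ Ioo (f a) (f b) :=
    ⟨hf (left_mem_Icc.2 (hy.1.le.trans hy.2.le)) hy' hy.1,
      hf hy' (right_mem_Icc.2 (hy.1.le.trans hy.2.le)) hy.2⟩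
  exact ⟨f y, hfy, hf.injOn (hmaps (Ioo_subset_Icc_self hfy)) hy' (hinv (Ioo_subset_Icc_self hfy))⟩

theorem hasDerivAt_of_rightInvOn (hf : ∀ y ∈ Icc a b, HasDerivAt f (f' y) y)
    (hf' : ∀ y ∈ Icc a b, 0 < f' y) (ht : t ∈ Ioo (f a) (f b)) :
    HasDerivAt m (f' (m t))⁻¹ t :=
  have hmt := Ioo_subset_Icc_self (mapsTo_Ioo_of_rightInvOn hmaps hinv ht)
  (hf _ hmt).of_local_left_inverse
    ((strictMonoOn_Icc_of_hasDerivAt_pos hf hf').continuousAt_of_rightInvOn hmaps hinv ht)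
    (hf' _ hmt).ne'
    (eventually_of_mem (isOpen_Ioo.mem_nhds ht) fun _ hs => hinv (Ioo_subset_Icc_self hs))

theorem hasDerivAt_deriv_of_rightInvOn {f'' : ℝ → ℝ} (hf : ∀ y ∈ Icc a b, HasDerivAt f (f' y) y)
    (hf' : ∀ y ∈ Icc a b, 0 < f' y) (ht : t ∈ Ioo (f a) (f b))
    (hf'' : HasDerivAt f' (f'' (m t)) (m t)) :
    HasDerivAt (deriv m) (-(f'' (m t) / f' (m t) ^ 3)) t := by
  have hderiv : deriv m =ᶠ[𝓝 t] fun s => (f' (m s))⁻¹ :=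
    eventually_of_mem (isOpen_Ioo.mem_nhds ht) fun s hs =>
      (hasDerivAt_of_rightInvOn hmaps hinv hf hf' hs).deriv
  have hne := (hf' _ (hmaps (Ioo_subset_Icc_self ht))).ne'
  refine ((hf''.comp t (hasDerivAt_of_rightInvOn hmaps hinv hf hf' ht)).inv hne
    |>.congr_of_eventuallyEq hderiv).congr_deriv ?_
  simp only [Function.comp_apply]
  field_simp

end RightInverse

theorem tan_mem_Icc_of_mem_Icc_arctan (n : ℤ) {p q u : ℝ}
    (hu : u ∈ Icc (π * n + arctan p) (π * n + arctan q)) : tan u ∈ Icc p q := by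
  have hv₁ : -(π / 2) < u - n * π := by linarith [hu.1, neg_pi_div_two_lt_arctan p]
  have hv₂ : u - n * π < π / 2 := by linarith [hu.2, arctan_lt_pi_div_two q]
  rw [← tan_periodic.sub_int_mul_eq n]
  constructor <;> refine arctan_strictMono.le_iff_le.1 ?_ <;> rw [arctan_tan hv₁ hv₂] <;>
    linarith [hu.1, hu.2]

theorem tan_log_mem_Icc_of_mem_Icc_Δ {x y : ℝ} (hy : y ∈ Icc (Δ₁ x) (Δ₂ x)) :
    tan (log y) ∈ Icc 1 2 := by
  refine tan_mem_Icc_of_mem_Icc_arctan ⌊log x / π⌋ ⟨?_, ?_⟩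
  · rw [← log_exp (π * _ + arctan 1)]
    exact log_le_log (exp_pos _) hy.1
  · rw [← log_exp (π * _ + arctan 2)]
    exact log_le_log ((exp_pos _).trans_le hy.1) hy.2

theorem pos_of_mem_Icc_Δ {x y : ℝ} (hy : y ∈ Icc (Δ₁ x) (Δ₂ x)) : 0 < y :=
  (exp_pos _).trans_le hy.1

theorem tan_log_pos_of_mem_Icc_Δ {x y : ℝ} (hy : y ∈ Icc (Δ₁ x) (Δ₂ x)) : 0 < tan (log y) :=
  one_pos.trans_le (tan_log_mem_Icc_of_mem_Icc_Δ hy).1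

theorem hasDerivAt_tan_log {y : ℝ} (hy : y ≠ 0) (hcos : cos (log y) ≠ 0) :
    HasDerivAt (fun z => tan (log z)) ((1 + tan (log y) ^ 2) / y) y := by
  refine ((hasDerivAt_tan hcos).comp y (hasDerivAt_log hy)).congr_deriv ?_
  rw [one_div, ← inv_one_add_tan_sq hcos, inv_inv, div_eq_mul_inv]

theorem hasDerivAt_rpow_mul_comp_tan_log {a y : ℝ} {R R' : ℝ → ℝ} (hy : 0 < y)
    (hcos : cos (log y) ≠ 0) (hR : HasDerivAt R (R' (tan (log y))) (tan (log y))) :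
    HasDerivAt (fun z => z ^ a * R (tan (log z)))
      (y ^ (a - 1) * (a * R (tan (log y)) + R' (tan (log y)) * (1 + tan (log y) ^ 2))) y := by
  refine ((hasDerivAt_rpow_const (Or.inl hy.ne')).mul
    (hR.comp y (hasDerivAt_tan_log hy.ne' hcos))).congr_deriv ?_
  rw [rpow_sub_one hy.ne', Function.comp_apply]
  field_simp

section Factors

variable {c θ T : ℝ}

noncomputable def gDerivFactor (c θ T : ℝ) : ℝ := c * T ^ θ + θ * T ^ (θ - 1) * (1 + T ^ 2)

noncomputable def gDerivFactorDeriv (c θ T : ℝ) : ℝ :=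
  c * θ * T ^ (θ - 1) + θ * (θ - 1) * T ^ (θ - 2) * (1 + T ^ 2) + 2 * θ * T ^ θ

noncomputable def gDeriv2Factor (c θ T : ℝ) : ℝ :=
  (c - 1) * gDerivFactor c θ T + gDerivFactorDeriv c θ T * (1 + T ^ 2)

noncomputable def mDeriv2Factor (c θ T : ℝ) : ℝ :=
  gDeriv2Factor c θ T / gDerivFactor c θ T ^ 3 * T ^ (θ * (2 - 1 / c))

theorem hasDerivAt_gDerivFactor (hT : 0 < T) :
    HasDerivAt (gDerivFactor c θ) (gDerivFactorDeriv c θ T) T := by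
  have hpow (a : ℝ) : HasDerivAt (fun u => u ^ a) (a * T ^ (a - 1)) T :=
    hasDerivAt_rpow_const (Or.inl hT.ne')
  refine (((hpow θ).const_mul c).add (((hpow (θ - 1)).const_mul θ).mul
    ((hasDerivAt_pow 2 T).const_add 1))).congr_deriv ?_
  rw [gDerivFactorDeriv, sub_sub, one_add_one_eq_two, rpow_sub_one hT.ne' θ]
  push_cast
  field_simp
  ring

theorem gDerivFactor_pos (hc : 0 < c) (hθ : 0 < θ) (hT : 0 < T) : 0 < gDerivFactor c θ T := by
  unfold gDerivFactor
  positivity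

theorem gDeriv2Factor_pos (hc : 1 ≤ c) (hθ : 1 ≤ θ) (hT : 0 < T) : 0 < gDeriv2Factor c θ T := by
  have hc₀ : 0 < c := by linarith
  have hθ₀ : 0 < θ := by linarith
  have hc₁ : 0 ≤ c - 1 := sub_nonneg.2 hc
  have hθ₁ : 0 ≤ θ - 1 := sub_nonneg.2 hθ
  have hQ := gDerivFactor_pos hc₀ hθ₀ hT
  unfold gDeriv2Factor gDerivFactorDeriv
  positivity

theorem mDeriv2Factor_pos (hc : 1 ≤ c) (hθ : 1 ≤ θ) (hT : 0 < T) : 0 < mDeriv2Factor c θ T := by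
  have hQ := gDerivFactor_pos (c := c) (θ := θ) (by linarith) (by linarith) hT
  have hP := gDeriv2Factor_pos hc hθ hT
  unfold mDeriv2Factor
  positivity

theorem continuousOn_mDeriv2Factor (hc : 0 < c) (hθ : 0 < θ) :
    ContinuousOn (mDeriv2Factor c θ) (Ioi 0) := by
  intro T hT
  have h := pow_ne_zero 3 (gDerivFactor_pos hc hθ hT).ne'
  have hT : T ≠ 0 := (mem_Ioi.1 hT).ne'
  refine ContinuousAt.continuousWithinAt ?_
  unfold gDerivFactor at h
  unfold mDeriv2Factor gDeriv2Factor gDerivFactorDeriv gDerivFactor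
  fun_prop (disch := first | assumption | exact Or.inl hT)

end Factors

theorem IsCompact.exists_pos_bounds {X : Type*} [TopologicalSpace X] {K : Set X} {f : X → ℝ}
    (hK : IsCompact K) (hne : K.Nonempty) (hf : ContinuousOn f K) (hpos : ∀ x ∈ K, 0 < f x) :
    ∃ c₁ c₂ : ℝ, 0 < c₁ ∧ c₁ ≤ c₂ ∧ ∀ x ∈ K, c₁ ≤ f x ∧ f x ≤ c₂ := by
  obtain ⟨c₁, hc₁, hle⟩ := hK.exists_forall_le' hf hpos
  obtain ⟨x₀, hx₀, hmax⟩ := hK.exists_isMaxOn hne hf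
  exact ⟨c₁, f x₀, hc₁, hle x₀ hx₀, fun x hx => ⟨hle x hx, hmax hx⟩⟩

section DerivativesOfG

variable {c θ y : ℝ}

noncomputable def gDeriv (c θ y : ℝ) : ℝ := y ^ (c - 1) * gDerivFactor c θ (tan (log y))

noncomputable def gDeriv2 (c θ y : ℝ) : ℝ := y ^ (c - 2) * gDeriv2Factor c θ (tan (log y))

theorem hasDerivAt_g (hy : 0 < y) (hT : 0 < tan (log y)) : HasDerivAt (g c θ) (gDeriv c θ y) y :=
  hasDerivAt_rpow_mul_comp_tan_log (R := (· ^ θ)) (R' := fun T => θ * T ^ (θ - 1)) hy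
    (mt tan_eq_zero_of_cos_eq_zero hT.ne') (hasDerivAt_rpow_const (Or.inl hT.ne'))

theorem hasDerivAt_gDeriv (hy : 0 < y) (hT : 0 < tan (log y)) :
    HasDerivAt (gDeriv c θ) (gDeriv2 c θ y) y :=
  (hasDerivAt_rpow_mul_comp_tan_log hy (mt tan_eq_zero_of_cos_eq_zero hT.ne')
    (hasDerivAt_gDerivFactor hT)).congr_deriv
      (by rw [gDeriv2, gDeriv2Factor, sub_sub, one_add_one_eq_two])

theorem gDeriv_pos (hc : 0 < c) (hθ : 0 < θ) (hy : 0 < y) (hT : 0 < tan (log y)) :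
    0 < gDeriv c θ y :=
  mul_pos (rpow_pos_of_pos hy _) (gDerivFactor_pos hc hθ hT)

theorem gDeriv2_div_gDeriv_pow_three (hc : c ≠ 0) (hy : 0 < y) (hT : 0 < tan (log y)) :
    gDeriv2 c θ y / gDeriv c θ y ^ 3 = mDeriv2Factor c θ (tan (log y)) * g c θ y ^ (1 / c - 2) := by
  set T := tan (log y)
  set P := gDeriv2Factor c θ T
  set Q := gDerivFactor c θ T
  have hy₃ : y ^ (c - 2) = (y ^ (c - 1)) ^ 3 * y ^ (c * (1 / c - 2)) := by
    rw [← rpow_natCast, ← rpow_mul hy.le, ← rpow_add hy]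
    congr 1
    field_simp
    ring
  have hT₀ : T ^ (θ * (2 - 1 / c)) * T ^ (θ * (1 / c - 2)) = 1 := by
    rw [← rpow_add hT, ← mul_add, sub_add_sub_cancel', sub_self, mul_zero, rpow_zero]
  rw [gDeriv2, gDeriv, mDeriv2Factor, g, mul_rpow (rpow_nonneg hy.le c) (rpow_nonneg hT.le θ),
    ← rpow_mul hy.le, ← rpow_mul hT.le, hy₃, mul_pow, mul_assoc,
    mul_div_mul_left _ _ (by positivity)]
  linear_combination (-(P / Q ^ 3 * y ^ (c * (1 / c - 2)))) * hT₀

end DerivativesOfG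

theorem stmt_5_general (c θ : ℝ) (hc₁ : 1 < c) (hθ : 1 < θ)
    (m : ℝ → ℝ → ℝ)
    (hm : ∀ x : ℝ, 2 ≤ x → ∀ t ∈ Set.Icc (g c θ (Δ₁ x)) (g c θ (Δ₂ x)),
      m x t ∈ Set.Icc (Δ₁ x) (Δ₂ x) ∧ g c θ (m x t) = t) :
    ∃ c₁ c₂ : ℝ, 0 < c₁ ∧ c₁ ≤ c₂ ∧
      ∀ x : ℝ, 2 ≤ x → ∀ t ∈ Set.Ioo (g c θ (Δ₁ x)) (g c θ (Δ₂ x)),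
        (DifferentiableAt ℝ (m x) t ∧ DifferentiableAt ℝ (deriv (m x)) t) ∧
          c₁ * t ^ (1 / c - 2) ≤ |deriv (deriv (m x)) t| ∧
          |deriv (deriv (m x)) t| ≤ c₂ * t ^ (1 / c - 2) := by
  have hc : 0 < c := by linarith
  have hθ₀ : 0 < θ := by linarith
  obtain ⟨c₁, c₂, hc₁₀, hc₁₂, hbounds⟩ := isCompact_Icc.exists_pos_bounds
    (nonempty_Icc.2 one_le_two)
    ((continuousOn_mDeriv2Factor hc hθ₀).mono fun T hT => one_pos.trans_le hT.1)
    fun T hT => mDeriv2Factor_pos hc₁.le hθ.le (one_pos.trans_le hT.1)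
  refine ⟨c₁, c₂, hc₁₀, hc₁₂, fun x hx t ht => ?_⟩
  have hg' : ∀ y ∈ Icc (Δ₁ x) (Δ₂ x), HasDerivAt (g c θ) (gDeriv c θ y) y :=
    fun y hy => hasDerivAt_g (pos_of_mem_Icc_Δ hy) (tan_log_pos_of_mem_Icc_Δ hy)
  have hg'₀ : ∀ y ∈ Icc (Δ₁ x) (Δ₂ x), 0 < gDeriv c θ y :=
    fun y hy => gDeriv_pos hc hθ₀ (pos_of_mem_Icc_Δ hy) (tan_log_pos_of_mem_Icc_Δ hy)
  have hmaps : MapsTo (m x) _ _ := fun t ht => (hm x hx t ht).1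
  have hinv : RightInvOn (m x) (g c θ) _ := fun t ht => (hm x hx t ht).2
  have hmt := hmaps (Ioo_subset_Icc_self ht)
  have hgt : g c θ (m x t) = t := hinv (Ioo_subset_Icc_self ht)
  have hy := pos_of_mem_Icc_Δ hmt
  have hT := tan_log_pos_of_mem_Icc_Δ hmt
  have ht₀ : 0 < t := hgt ▸ mul_pos (rpow_pos_of_pos hy c) (rpow_pos_of_pos hT θ)
  have hm'' := hasDerivAt_deriv_of_rightInvOn hmaps hinv hg' hg'₀ ht (hasDerivAt_gDeriv hy hT)
  have habs :
      |deriv (deriv (m x)) t| = mDeriv2Factor c θ (tan (log (m x t))) * t ^ (1 / c - 2) := by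
    rw [hm''.deriv, abs_neg, gDeriv2_div_gDeriv_pow_three hc.ne' hy hT, hgt]
    exact abs_of_pos (mul_pos (mDeriv2Factor_pos hc₁.le hθ.le hT) (rpow_pos_of_pos ht₀ _))
  obtain ⟨hlo, hhi⟩ := hbounds _ (tan_log_mem_Icc_of_mem_Icc_Δ hmt)
  refine ⟨⟨(hasDerivAt_of_rightInvOn hmaps hinv hg' hg'₀ ht).differentiableAt,
    hm''.differentiableAt⟩, ?_, ?_⟩ <;> rw [habs] <;> gcongr

theorem stmt_5 (c θ : ℝ) (hc₁ : 1 < c) (hc₂ : c < 12 / 11) (hθ : 1 < θ)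
    (m : ℝ → ℝ → ℝ)
    (hm : ∀ x : ℝ, 2 ≤ x → ∀ t ∈ Set.Icc (g c θ (Δ₁ x)) (g c θ (Δ₂ x)),
      m x t ∈ Set.Icc (Δ₁ x) (Δ₂ x) ∧ g c θ (m x t) = t) :
    ∃ c₁ c₂ : ℝ, 0 < c₁ ∧ c₁ ≤ c₂ ∧
      ∀ x : ℝ, 2 ≤ x → ∀ t ∈ Set.Ioo (g c θ (Δ₁ x)) (g c θ (Δ₂ x)),
        (DifferentiableAt ℝ (m x) t ∧ DifferentiableAt ℝ (deriv (m x)) t) ∧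
          c₁ * t ^ (1 / c - 2) ≤ |deriv (deriv (m x)) t| ∧
          |deriv (deriv (m x)) t| ≤ c₂ * t ^ (1 / c - 2) :=
  stmt_5_general c θ hc₁ hθ m hm
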